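/- Let a : ℂ → ℂ be a nonconstant entire function with a(w) ≠ 0 for all w, and let c ∈ ℂ with Im(c) ≠ 0. If v ∈ ℝ⁴ satisfies ⟪v, (1 + c, 1/a(w) + c·a(w), i(1/a(w) − c·a(w)), 1 − c)⟫ = 0 for every w ∈ ℂ (complex bilinear Minkowski form), then v = 0. In particular, the minimal surface with Weierstrass data (μ, a, b) = (1/a, a, c·a) is not contained in any hyperplane of ℝ⁴₁. -/
import Mathlib


/-- The complex-bilinear extension of the Minkowski form to `ℂ⁴`. -/
noncomputable def minkC (x y : Fin 4 → ℂ) : ℂ :=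
  -(x 0 * y 0) + x 1 * y 1 + x 2 * y 2 + x 3 * y 3

theorem stmt16 (a : ℂ → ℂ) (ha : Differentiable ℂ a)
    (hnc : ¬∃ k : ℂ, ∀ w : ℂ, a w = k) (ha0 : ∀ w : ℂ, a w ≠ 0)
    (c : ℂ) (hci : c.im ≠ 0)
    (v : Fin 4 → ℝ)
    (hv : ∀ w : ℂ, minkC (fun i => ((v i : ℝ) : ℂ))
      ![1 + c, 1 / a w + c * a w, Complex.I * (1 / a w - c * a w), 1 - c] = 0) :
    v = 0 := by
  classical
  set α : ℂ := (v 1 : ℂ) + Complex.I * (v 2 : ℂ) with hα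
  set β : ℂ := c * ((v 1 : ℂ) - Complex.I * (v 2 : ℂ)) with hβ
  set γ : ℂ := -(v 0 : ℂ) * (1 + c) + (v 3 : ℂ) * (1 - c) with hγ
  have key : ∀ w : ℂ, α + γ * a w + β * (a w) ^ 2 = 0 := by
    intro w
    have h := hv w
    simp only [minkC, Matrix.cons_val_zero, Matrix.cons_val_one, Matrix.head_cons,
      Matrix.cons_val_two, Matrix.tail_cons, Matrix.cons_val_three] at h
    have hna := ha0 w
    have h2 : α + γ * a w + β * (a w) ^ 2 =
        (-((v 0 : ℂ) * (1 + c)) + (v 1 : ℂ) * (1 / a w + c * a w) +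
          (v 2 : ℂ) * (Complex.I * (1 / a w - c * a w)) + (v 3 : ℂ) * (1 - c)) * a w := by
      field_simp
      ring
    rw [h, zero_mul] at h2
    exact h2
  -- the polynomial α + γ X + β X² vanishes on the infinite range of a
  set p : Polynomial ℂ := Polynomial.C α + Polynomial.C γ * Polynomial.X +
      Polynomial.C β * Polynomial.X ^ 2 with hp
  have hroots : Set.range a ⊆ {x | p.IsRoot x} := by
    rintro _ ⟨w, rfl⟩
    simp [p, Polynomial.IsRoot, key w]
  have hrange : (Set.range a).Infinite := by
    have hconn : IsPreconnected (Set.range a) := by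
      rw [← Set.image_univ]
      exact isPreconnected_univ.image a ha.continuous.continuousOn
    have hnt : (Set.range a).Nontrivial := by
      push_neg at hnc
      obtain ⟨w, hw⟩ := hnc (a 0)
      exact ⟨a w, ⟨w, rfl⟩, a 0, ⟨0, rfl⟩, hw⟩
    exact hconn.infinite_of_nontrivial hnt
  have hp0 : p = 0 := Polynomial.eq_zero_of_infinite_isRoot p (hrange.mono hroots)
  have hα0 : α = 0 := by
    have := congrArg (fun q => Polynomial.coeff q 0) hp0
    simpa [p] using this
  have hγ0 : γ = 0 := by
    have := congrArg (fun q => Polynomial.coeff q 1) hp0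
    simpa [p] using this
  -- extract real equations
  rw [hα] at hα0
  rw [hγ] at hγ0
  have hv1 : v 1 = 0 := by
    have := congrArg Complex.re hα0
    simpa using this
  have hv2 : v 2 = 0 := by
    have := congrArg Complex.im hα0
    simpa using this
  have hre := congrArg Complex.re hγ0
  have him := congrArg Complex.im hγ0
  simp [Complex.add_im, Complex.mul_im, Complex.add_re, Complex.mul_re,
    Complex.sub_re, Complex.sub_im, Complex.neg_re, Complex.neg_im] at hre him
  have h03 : v 0 + v 3 = 0 := by
    have hm : (v 0 + v 3) * c.im = 0 := by linear_combination -him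
    rcases mul_eq_zero.mp hm with h | h
    · exact h
    · exact absurd h hci
  have hv3 : v 3 = 0 := by linear_combination (1/2)*hre + (c.re/2)*h03 + (1/2)*h03
  have hv0 : v 0 = 0 := by linarith
  funext i
  fin_cases i <;> simp [hv0, hv1, hv2, hv3]
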